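/- Let X be a complex Banach space, 1 ≤ p < ∞, A a closed linear operator on X with domain D(A), B a bounded linear operator on X, and r_1,…,r_n real numbers. Assume that for every k ∈ ℤ the operator Δ_k = ikI − A − Σ_{j=1}^n e^{−ikr_j} B : D(A) → X is bijective with bounded inverse, and that for every f ∈ L^p(𝕋;X) there exists a 2π-periodic continuous function x : ℝ → X with ∫₀^t x(s) ds ∈ D(A) for all t ∈ [0,2π] and x(t) = x(0) + A∫₀^t x(s) ds + ∫₀^t ( Σ_{j=1}^n B x(s − r_j) + f(s) ) ds for all t ∈ [0,2π]. Then the sequence {Δ_k^{−1}}_{k∈ℤ} is an L^p-multiplier. -/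

import Mathlib

open MeasureTheory Real Complex Filter Finset intervalIntegral
open scoped ENNReal NNReal

noncomputable section

/-- `f` represents an element of `L^p(𝕋; X)`: it is `2π`-periodic and
`p`-integrable over one period `(0, 2π]`. -/
def PeriodicLp {X : Type*} [NormedAddCommGroup X] (p : ℝ≥0∞) (f : ℝ → X) : Prop :=
  Function.Periodic f (2 * Real.pi) ∧
    MeasureTheory.MemLp f p (MeasureTheory.volume.restrict (Set.Ioc 0 (2 * Real.pi)))

/-- The `k`-th Fourier coefficient `f̂(k) = (1/(2π)) ∫₀^{2π} e^{-iks} f(s) ds`. -/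
def fourierCoef {X : Type*} [NormedAddCommGroup X] [NormedSpace ℂ X] (f : ℝ → X) (k : ℤ) : X :=
  (1 / (2 * (Real.pi : ℂ))) •
    ∫ s in (0:ℝ)..(2 * Real.pi), Complex.exp (-Complex.I * (k : ℂ) * (s : ℂ)) • f s

/-- A family `T ⊆ B(X, Y)` of bounded operators is `R`-bounded: there are `C > 0` and
`q ∈ [1, ∞)` such that for all `m`, all `T₁, …, T_m ∈ T` and `x₁, …, x_m ∈ X`,
`(2^{-m} Σ_{ε ∈ {-1,1}^m} ‖Σ_j ε_j T_j x_j‖^q)^{1/q} ≤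
 C (2^{-m} Σ_{ε ∈ {-1,1}^m} ‖Σ_j ε_j x_j‖^q)^{1/q}`, where signs `ε ∈ {-1,1}^m` are
encoded by maps `Fin m → Bool`. -/
def RBounded {X Y : Type*} [NormedAddCommGroup X] [NormedSpace ℂ X]
    [NormedAddCommGroup Y] [NormedSpace ℂ Y] (T : Set (X →L[ℂ] Y)) : Prop :=
  ∃ C q : ℝ, 0 < C ∧ 1 ≤ q ∧
    ∀ (m : ℕ) (Ts : Fin m → (X →L[ℂ] Y)) (x : Fin m → X), (∀ j, Ts j ∈ T) →
      (((2:ℝ)⁻¹) ^ m * ∑ ε : Fin m → Bool,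
          ‖∑ j, (if ε j then (1:ℝ) else -1) • Ts j (x j)‖ ^ q) ^ (1/q) ≤
      C * ((((2:ℝ)⁻¹) ^ m * ∑ ε : Fin m → Bool,
          ‖∑ j, (if ε j then (1:ℝ) else -1) • x j‖ ^ q) ^ (1/q))

/-- `{M_k}_{k ∈ ℤ}` is an `L^p`-multiplier: for each `f ∈ L^p(𝕋; X)` there is
`u ∈ L^p(𝕋; Y)` with `û(k) = M_k f̂(k)` for all `k`. -/
def IsLpMultiplier {X Y : Type*} [NormedAddCommGroup X] [NormedSpace ℂ X]
    [NormedAddCommGroup Y] [NormedSpace ℂ Y] (p : ℝ≥0∞) (M : ℤ → (X →L[ℂ] Y)) : Prop :=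
  ∀ f : ℝ → X, PeriodicLp p f →
    ∃ u : ℝ → Y, PeriodicLp p u ∧ ∀ k : ℤ, fourierCoef u k = M k (fourierCoef f k)

/-- `u` represents an element of `H^{1,p}(𝕋; X)`: `u ∈ L^p(𝕋; X)` and there is
`v ∈ L^p(𝕋; X)` with `v̂(k) = ik û(k)` for all `k`. -/
def MemH1p {X : Type*} [NormedAddCommGroup X] [NormedSpace ℂ X] (p : ℝ≥0∞) (u : ℝ → X) : Prop :=
  PeriodicLp p u ∧ ∃ v : ℝ → X, PeriodicLp p v ∧
    ∀ k : ℤ, fourierCoef v k = (Complex.I * (k : ℂ)) • fourierCoef u k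

/-- The (possibly unbounded) linear operator `A` with domain `D` is closed. -/
def IsClosedOp {X : Type*} [NormedAddCommGroup X] [NormedSpace ℂ X]
    (D : Submodule ℂ X) (A : D →ₗ[ℂ] X) : Prop :=
  ∀ (x : ℕ → D) (a b : X),
    Filter.Tendsto (fun m => (x m : X)) Filter.atTop (nhds a) →
    Filter.Tendsto (fun m => A (x m)) Filter.atTop (nhds b) →
    ∃ ha : a ∈ D, A ⟨a, ha⟩ = b

/-- `x` is a `2π`-periodic strong `L^p`-solution of
`x′(t) = A x(t) + Σ_{j=1}^n B x(t - r_j) + f(t)`, `x(0) = x(2π)`: it belongs to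
`H^{1,p}(𝕋; X)` (with `v` playing the role of `x′`), `x(t) ∈ D(A)` a.e. and the
equation holds almost everywhere on a period. -/
def IsStrongSolution {X : Type*} [NormedAddCommGroup X] [NormedSpace ℂ X]
    (p : ℝ≥0∞) (D : Submodule ℂ X) (A : D →ₗ[ℂ] X) (B : X →L[ℂ] X)
    {n : ℕ} (r : Fin n → ℝ) (f : ℝ → X) (x : ℝ → X) : Prop :=
  PeriodicLp p x ∧
  ∃ v : ℝ → X, PeriodicLp p v ∧
    (∀ k : ℤ, fourierCoef v k = (Complex.I * (k : ℂ)) • fourierCoef x k) ∧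
    ∀ᵐ t ∂(MeasureTheory.volume.restrict (Set.Ioc 0 (2 * Real.pi))),
      ∃ hx : x t ∈ D, v t = A ⟨x t, hx⟩ + (∑ j, B (x (t - r j))) + f t



/-!
A mild solution `x` for the forcing `f` satisfies `x̂(k) = Δ_k⁻¹ f̂(k)`, so `x` itself is the
required `L^p` function. Since `x̂(k)` need not lie in `D(A)`, one cannot apply `Δ_k` to it;
instead the bounded left inverse `R_k` is applied pointwise to the `D(A)`-valued primitive
`X(t) = ∫₀ᵗ x`, and Fourier coefficients commute with `R_k`. Integration by parts
(Fubini on the triangle) gives `ik X̂(k) = x̂(k) - x̂(0)`, and the equation at `t = 2π` gives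
`x̂(0) ∈ D(A)` with `A x̂(0) = -ĝ(0)`, `g` being the full right-hand side. Combining,
`x̂(k) = R_k (ĝ(k) - Σ_j e^{-ikr_j} B x̂(k)) = R_k f̂(k)`.
-/

theorem periodic_exp_neg_I_mul_intCast (k : ℤ) :
    Function.Periodic (fun t : ℝ => Complex.exp (-I * k * t)) (2 * π) := by
  intro t
  simp only [ofReal_add, ofReal_mul, ofReal_ofNat, mul_add, Complex.exp_add]
  rw [show -I * k * (2 * π) = (-k : ℤ) * (2 * π * I) by push_cast; ring,
    exp_int_mul_two_pi_mul_I, mul_one]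

theorem exp_neg_I_mul_intCast_two_pi (k : ℤ) : Complex.exp (-I * k * (2 * π : ℝ)) = 1 := by
  simpa using periodic_exp_neg_I_mul_intCast k 0

theorem integral_exp_neg_I_mul_intCast {k : ℤ} (hk : k ≠ 0) :
    ∫ t in (0:ℝ)..(2 * π), Complex.exp (-I * k * t) = 0 := by
  have hc : -I * k ≠ 0 := by simp [hk, I_ne_zero]
  rw [integral_exp_mul_complex hc, exp_neg_I_mul_intCast_two_pi]
  simp

section FourierCoef

variable {X : Type*} [NormedAddCommGroup X] [NormedSpace ℂ X]

theorem IntervalIntegrable.exp_smul {y : ℝ → X} {a b : ℝ} (hy : IntervalIntegrable y volume a b)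
    (k : ℤ) : IntervalIntegrable (fun s : ℝ => Complex.exp (-I * k * s) • y s) volume a b :=
  hy.continuousOn_smul (by fun_prop)

theorem fourierCoef_congr {f g : ℝ → X} (h : Set.EqOn f g (Set.Icc 0 (2 * π))) (k : ℤ) :
    fourierCoef f k = fourierCoef g k := by
  unfold fourierCoef
  congr 1
  refine integral_congr fun s hs => ?_
  rw [Set.uIcc_of_le two_pi_pos.le] at hs
  simp only [h hs]

theorem fourierCoef_zero (f : ℝ → X) :
    fourierCoef f 0 = (1 / (2 * (π : ℂ))) • ∫ s in (0:ℝ)..(2 * π), f s := by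
  simp [fourierCoef]

theorem fourierCoef_add {f g : ℝ → X} (hf : IntervalIntegrable f volume 0 (2 * π))
    (hg : IntervalIntegrable g volume 0 (2 * π)) (k : ℤ) :
    fourierCoef (fun s => f s + g s) k = fourierCoef f k + fourierCoef g k := by
  unfold fourierCoef
  simp only [smul_add (Complex.exp _), integral_add (hf.exp_smul k) (hg.exp_smul k), smul_add]

theorem fourierCoef_sub {f g : ℝ → X} (hf : IntervalIntegrable f volume 0 (2 * π))
    (hg : IntervalIntegrable g volume 0 (2 * π)) (k : ℤ) :
    fourierCoef (fun s => f s - g s) k = fourierCoef f k - fourierCoef g k := by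
  unfold fourierCoef
  simp only [smul_sub (Complex.exp _), integral_sub (hf.exp_smul k) (hg.exp_smul k), smul_sub]

theorem fourierCoef_sum {ι : Type*} (s : Finset ι) {f : ι → ℝ → X}
    (hf : ∀ i ∈ s, IntervalIntegrable (f i) volume 0 (2 * π)) (k : ℤ) :
    fourierCoef (fun t => ∑ i ∈ s, f i t) k = ∑ i ∈ s, fourierCoef (f i) k := by
  unfold fourierCoef
  simp only [Finset.smul_sum (r := Complex.exp _),
    integral_finsetSum fun i hi => (hf i hi).exp_smul k, Finset.smul_sum]

theorem fourierCoef_const [CompleteSpace X] (c : X) (k : ℤ) :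
    (I * k) • fourierCoef (fun _ => c) k = 0 := by
  rcases eq_or_ne k 0 with rfl | hk
  · simp
  rw [fourierCoef, intervalIntegral.integral_smul_const, integral_exp_neg_I_mul_intCast hk,
    zero_smul, smul_zero, smul_zero]

theorem fourierCoef_comp_sub {f : ℝ → X} (hf : Function.Periodic f (2 * π)) (k : ℤ) (r : ℝ) :
    fourierCoef (fun s => f (s - r)) k = Complex.exp (-I * k * r) • fourierCoef f k := by
  have hper : Function.Periodic (fun s : ℝ => Complex.exp (-I * k * s) • f s) (2 * π) := fun s => by
    simp only [periodic_exp_neg_I_mul_intCast k s, hf s]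
  have hshift : ∀ s : ℝ, Complex.exp (-I * k * s) • f (s - r)
      = Complex.exp (-I * k * r) • (Complex.exp (-I * k * ↑(s - r)) • f (s - r)) := fun s => by
    rw [smul_smul, ← Complex.exp_add]; push_cast; ring_nf
  unfold fourierCoef
  simp only [hshift, intervalIntegral.integral_smul, smul_comm (1 / (2 * (π : ℂ)))]
  rw [intervalIntegral.integral_comp_sub_right (fun s => Complex.exp (-I * k * s) • f s), zero_sub,
    show 2 * π - r = -r + 2 * π by ring, hper.intervalIntegral_add_eq (-r) 0, zero_add]

end FourierCoef

namespace ContinuousLinearMap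

variable {X Y : Type*} [NormedAddCommGroup X] [NormedSpace ℂ X] [NormedAddCommGroup Y]
  [NormedSpace ℂ Y]

theorem intervalIntegrable_comp (L : X →L[ℂ] Y) {f : ℝ → X} {a b : ℝ}
    (hf : IntervalIntegrable f volume a b) : IntervalIntegrable (fun s => L (f s)) volume a b :=
  ⟨L.integrable_comp hf.1, L.integrable_comp hf.2⟩

theorem fourierCoef_comp [CompleteSpace X] [CompleteSpace Y] (L : X →L[ℂ] Y) {f : ℝ → X}
    (hf : IntervalIntegrable f volume 0 (2 * π)) (k : ℤ) :
    fourierCoef (fun s => L (f s)) k = L (fourierCoef f k) := by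
  simp only [fourierCoef, map_smul, ← L.intervalIntegral_comp_comm (hf.exp_smul k)]

end ContinuousLinearMap

section Primitive

variable {X : Type*} [NormedAddCommGroup X] [NormedSpace ℂ X] [CompleteSpace X]

theorem intervalIntegral_smul_primitive {b : ℝ} (hb : 0 ≤ b) {φ : ℝ → ℂ} (hφ : Continuous φ)
    {f : ℝ → X} (hf : IntervalIntegrable f volume 0 b) :
    ∫ t in (0:ℝ)..b, φ t • ∫ s in (0:ℝ)..t, f s
      = ∫ s in (0:ℝ)..b, (∫ t in s..b, φ t) • f s := by
  set μ := volume.restrict (Set.Ioc 0 b)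
  let F : ℝ → ℝ → X := fun t s => (Set.Ici s).indicator (fun t' => φ t' • f s) t
  have hF : Integrable (Function.uncurry F) (μ.prod μ) := by
    have hprod : Integrable (fun q : ℝ × ℝ => φ q.1 • f q.2) (μ.prod μ) :=
      hφ.integrableOn_Ioc.smul_prod ((intervalIntegrable_iff_integrableOn_Ioc_of_le hb).1 hf)
    have hF_eq : Function.uncurry F
        = {q : ℝ × ℝ | q.2 ≤ q.1}.indicator fun q => φ q.1 • f q.2 := by
      ext ⟨t, s⟩; simp only [Function.uncurry_apply_pair, F, Set.indicator, Set.mem_Ici,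
        Set.mem_ofPred_eq]
    rw [hF_eq]
    exact hprod.indicator (isClosed_le continuous_snd continuous_fst).measurableSet
  have hinner_s : ∀ t ∈ Set.Ioc 0 b, ∫ s, F t s ∂μ = φ t • ∫ s in (0:ℝ)..t, f s := by
    intro t ht
    have hF_t : F t = (Set.Iic t).indicator fun s => φ t • f s := by
      ext s; simp only [F, Set.indicator, Set.mem_Ici, Set.mem_Iic]
    rw [hF_t, setIntegral_indicator measurableSet_Iic, Set.Ioc_inter_Iic, inf_eq_right.2 ht.2,
      MeasureTheory.integral_smul, integral_of_le ht.1.le]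
  have hinner_t : ∀ s ∈ Set.Ioc 0 b, ∫ t, F t s ∂μ = (∫ t in s..b, φ t) • f s := by
    intro s hs
    have hIcc : Set.Ioc 0 b ∩ Set.Ici s = Set.Icc s b := by
      ext t; simp only [Set.mem_inter_iff, Set.mem_Ioc, Set.mem_Ici, Set.mem_Icc]
      constructor
      · rintro ⟨⟨-, htb⟩, hst⟩; exact ⟨hst, htb⟩
      · rintro ⟨hst, htb⟩; exact ⟨⟨hs.1.trans_le hst, htb⟩, hst⟩
    rw [setIntegral_indicator measurableSet_Ici, hIcc, integral_Icc_eq_integral_Ioc,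
      _root_.integral_smul_const, integral_of_le hs.2]
  calc ∫ t in (0:ℝ)..b, φ t • ∫ s in (0:ℝ)..t, f s
      = ∫ t, ∫ s, F t s ∂μ ∂μ := by
        rw [integral_of_le hb]
        exact setIntegral_congr_fun measurableSet_Ioc fun t ht => (hinner_s t ht).symm
    _ = ∫ s, ∫ t, F t s ∂μ ∂μ := integral_integral_swap hF
    _ = ∫ s in (0:ℝ)..b, (∫ t in s..b, φ t) • f s := by
        rw [integral_of_le hb]
        exact setIntegral_congr_fun measurableSet_Ioc hinner_t

theorem fourierCoef_primitive {y : ℝ → X} (hy : IntervalIntegrable y volume 0 (2 * π)) (k : ℤ) :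
    (I * k) • fourierCoef (fun t => ∫ s in (0:ℝ)..t, y s) k
      = fourierCoef y k - fourierCoef y 0 := by
  rcases eq_or_ne k 0 with rfl | hk
  · simp
  have hIk : I * k ≠ 0 := by simp [hk, I_ne_zero]
  have hinner : ∀ s : ℝ, (∫ t in s..(2 * π), Complex.exp (-I * k * t)) • y s
      = (I * k)⁻¹ • (Complex.exp (-I * k * s) • y s - y s) := fun s => by
    have hc : -I * k ≠ 0 := by simpa using hIk
    rw [integral_exp_mul_complex hc, exp_neg_I_mul_intCast_two_pi,
      show (1 - Complex.exp (-I * k * s)) / (-I * k) = (I * k)⁻¹ * (Complex.exp (-I * k * s) - 1)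
        by field_simp; ring, mul_smul, sub_smul, one_smul]
  rw [fourierCoef_zero, fourierCoef, fourierCoef, smul_comm,
    intervalIntegral_smul_primitive two_pi_pos.le (by fun_prop) hy]
  simp only [hinner]
  rw [intervalIntegral.integral_smul, integral_sub (hy.exp_smul k) hy, smul_smul (I * k),
    mul_inv_cancel₀ hIk, one_smul, smul_sub]

end Primitive

theorem Function.Periodic.intervalIntegrable_comp_sub {E : Type*} [NormedAddCommGroup E]
    {x : ℝ → E} {T : ℝ} (hx : Function.Periodic x T) (hT : T ≠ 0)
    (hx0 : IntervalIntegrable x volume 0 T) (r : ℝ) :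
    IntervalIntegrable (fun s => x (s - r)) volume 0 T := by
  simpa using (hx.intervalIntegrable₀ hT hx0 (-r) (T - r)).comp_sub_right r

section DelayEquation

variable {X : Type*} [NormedAddCommGroup X] [NormedSpace ℂ X]

def delayOp (B : X →L[ℂ] X) {n : ℕ} (r : Fin n → ℝ) (k : ℤ) : X →L[ℂ] X :=
  ∑ j, Complex.exp (-I * k * r j) • B

theorem delayOp_apply (B : X →L[ℂ] X) {n : ℕ} (r : Fin n → ℝ) (k : ℤ) (y : X) :
    delayOp B r k y = ∑ j, Complex.exp (-I * k * r j) • B y := by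
  simp [delayOp]

theorem intervalIntegrable_delaySum (B : X →L[ℂ] X) {n : ℕ} (r : Fin n → ℝ) {x : ℝ → X}
    (hx : Function.Periodic x (2 * π)) (hx0 : IntervalIntegrable x volume 0 (2 * π)) :
    IntervalIntegrable (fun s => ∑ j, B (x (s - r j))) volume 0 (2 * π) := by
  simpa only [Finset.sum_fn] using IntervalIntegrable.sum Finset.univ fun j _ =>
    B.intervalIntegrable_comp (hx.intervalIntegrable_comp_sub two_pi_pos.ne' hx0 (r j))

theorem mild_solution_mean {D : Submodule ℂ X} {A : D →ₗ[ℂ] X} {x g : ℝ → X}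
    (hx2 : x (2 * π) = x 0) (hmem : ∀ t ∈ Set.Icc 0 (2 * π), (∫ s in (0:ℝ)..t, x s) ∈ D)
    (hmild : ∀ t (ht : t ∈ Set.Icc 0 (2 * π)),
      x t = x 0 + A ⟨∫ s in (0:ℝ)..t, x s, hmem t ht⟩ + ∫ s in (0:ℝ)..t, g s) :
    ∃ hmean : fourierCoef x 0 ∈ D, A ⟨fourierCoef x 0, hmean⟩ = -fourierCoef g 0 := by
  have h2π : 2 * π ∈ Set.Icc 0 (2 * π) := Set.right_mem_Icc.2 two_pi_pos.le
  have hmean : fourierCoef x 0 ∈ D := by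
    rw [fourierCoef_zero]; exact D.smul_mem _ (hmem _ h2π)
  have hsmul : (⟨fourierCoef x 0, hmean⟩ : D) = (1 / (2 * (π : ℂ))) • ⟨_, hmem _ h2π⟩ :=
    Subtype.ext (fourierCoef_zero x)
  refine ⟨hmean, ?_⟩
  have hA2π : A ⟨_, hmem _ h2π⟩ = -∫ s in (0:ℝ)..(2 * π), g s := by
    rw [eq_neg_iff_add_eq_zero, ← add_right_inj (x 0), ← add_assoc, ← hmild _ h2π, hx2, add_zero]
  rw [hsmul, map_smul, hA2π, fourierCoef_zero, smul_neg]

variable [CompleteSpace X]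

theorem fourierCoef_delay_add (B : X →L[ℂ] X) {n : ℕ} (r : Fin n → ℝ) {x f : ℝ → X}
    (hx : Function.Periodic x (2 * π)) (hx0 : IntervalIntegrable x volume 0 (2 * π))
    (hf : IntervalIntegrable f volume 0 (2 * π)) (k : ℤ) :
    fourierCoef (fun s => ∑ j, B (x (s - r j)) + f s) k
      = delayOp B r k (fourierCoef x k) + fourierCoef f k := by
  have hshift (j : Fin n) : IntervalIntegrable (fun s => x (s - r j)) volume 0 (2 * π) :=
    hx.intervalIntegrable_comp_sub two_pi_pos.ne' hx0 (r j)
  rw [fourierCoef_add (intervalIntegrable_delaySum B r hx hx0) hf,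
    fourierCoef_sum _ fun j _ => B.intervalIntegrable_comp (hshift j), delayOp_apply]
  congr 1
  refine Finset.sum_congr rfl fun j _ => ?_
  rw [B.fourierCoef_comp (hshift j), fourierCoef_comp_sub hx, map_smul]

theorem fourierCoef_eq_of_leftInverse {D : Submodule ℂ X} {A : D →ₗ[ℂ] X} {L T : X →L[ℂ] X}
    (hL : ∀ y : D, L (T y - A y) = y) {Y h : ℝ → X}
    (hY : IntervalIntegrable Y volume 0 (2 * π)) (hh : IntervalIntegrable h volume 0 (2 * π))
    (hAY : ∀ t ∈ Set.Icc 0 (2 * π), ∃ hmem : Y t ∈ D, A ⟨Y t, hmem⟩ = h t) (k : ℤ) :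
    fourierCoef Y k = L (T (fourierCoef Y k) - fourierCoef h k) := by
  have hTY := T.intervalIntegrable_comp hY
  calc fourierCoef Y k = fourierCoef (fun t => L (T (Y t) - h t)) k := by
        refine fourierCoef_congr (fun t ht => ?_) k
        obtain ⟨hmem, hA⟩ := hAY t ht
        rw [← hA]
        exact (hL ⟨Y t, hmem⟩).symm
    _ = L (T (fourierCoef Y k) - fourierCoef h k) := by
        rw [L.fourierCoef_comp (hTY.sub hh), fourierCoef_sub hTY hh, T.fourierCoef_comp hY]

theorem fourierCoef_eq_of_mild_solution {D : Submodule ℂ X} {A : D →ₗ[ℂ] X} {L T : X →L[ℂ] X}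
    (hL : ∀ y : D, L (T y - A y) = y) {x g : ℝ → X}
    (hx : IntervalIntegrable x volume 0 (2 * π)) (hg : IntervalIntegrable g volume 0 (2 * π))
    (hx2 : x (2 * π) = x 0) (hmem : ∀ t ∈ Set.Icc 0 (2 * π), (∫ s in (0:ℝ)..t, x s) ∈ D)
    (hmild : ∀ t (ht : t ∈ Set.Icc 0 (2 * π)),
      x t = x 0 + A ⟨∫ s in (0:ℝ)..t, x s, hmem t ht⟩ + ∫ s in (0:ℝ)..t, g s) (k : ℤ) :
    fourierCoef x k = L (T (fourierCoef x k) - (I * k) • fourierCoef x k + fourierCoef g k) := by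
  have hprim {y : ℝ → X} (hy : IntervalIntegrable y volume 0 (2 * π)) :
      IntervalIntegrable (fun t => ∫ s in (0:ℝ)..t, y s) volume 0 (2 * π) :=
    (continuousOn_primitive_interval' hy Set.left_mem_uIcc).intervalIntegrable
  have hAX : ∀ t ∈ Set.Icc 0 (2 * π), ∃ hm : (∫ s in (0:ℝ)..t, x s) ∈ D,
      A ⟨_, hm⟩ = x t - x 0 - ∫ s in (0:ℝ)..t, g s :=
    fun t ht => ⟨hmem t ht, by rw [hmild t ht]; abel⟩
  have hx_sub := hx.sub (intervalIntegrable_const (c := x 0))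
  have hX := fourierCoef_eq_of_leftInverse hL (hprim hx) (hx_sub.sub (hprim hg)) hAX k
  rw [fourierCoef_sub hx_sub (hprim hg), fourierCoef_sub hx intervalIntegrable_const] at hX
  have hXk := fourierCoef_primitive hx k
  obtain ⟨hmean, hA_mean⟩ := mild_solution_mean hx2 hmem hmild
  have hmean_eq := hL ⟨_, hmean⟩
  rw [hA_mean, sub_neg_eq_add] at hmean_eq
  calc fourierCoef x k
      = (I * k) • fourierCoef (fun t => ∫ s in (0:ℝ)..t, x s) k + fourierCoef x 0 := by
        rw [hXk, sub_add_cancel]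
    _ = L (T ((I * k) • fourierCoef (fun t => ∫ s in (0:ℝ)..t, x s) k)
          - (I * k) • (fourierCoef x k - fourierCoef (fun _ => x 0) k
            - fourierCoef (fun t => ∫ s in (0:ℝ)..t, g s) k))
        + L (T (fourierCoef x 0) + fourierCoef g 0) := by
        rw [hmean_eq, T.map_smul, ← smul_sub, L.map_smul, ← hX]
    _ = L (T (fourierCoef x k) - (I * k) • fourierCoef x k + fourierCoef g k) := by
        rw [hXk, smul_sub, smul_sub, fourierCoef_const, fourierCoef_primitive hg, ← map_add,
          T.map_sub]
        congr 1
        abel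

end DelayEquation

theorem ContinuousOn.memLp_restrict_Ioc {E : Type*} [NormedAddCommGroup E] {x : ℝ → E}
    {a b : ℝ} (hx : ContinuousOn x (Set.Icc a b)) (p : ℝ≥0∞) :
    MemLp x p (volume.restrict (Set.Ioc a b)) := by
  obtain ⟨C, hC⟩ := isCompact_Icc.exists_bound_of_continuousOn hx
  exact MemLp.of_bound ((hx.mono Set.Ioc_subset_Icc_self).aestronglyMeasurable measurableSet_Ioc)
    C (ae_restrict_of_forall_mem measurableSet_Ioc fun t ht => hC t (Set.Ioc_subset_Icc_self ht))

theorem mild_solvability_implies_multiplier_general {X : Type*}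
    [NormedAddCommGroup X] [NormedSpace ℂ X] [CompleteSpace X]
    (p : ℝ≥0∞) (hp1 : 1 ≤ p)
    (D : Submodule ℂ X) (A : D →ₗ[ℂ] X)
    (B : X →L[ℂ] X) (n : ℕ) (r : Fin n → ℝ)
    (R : ℤ → (X →L[ℂ] X))
    (hRleft : ∀ (k : ℤ) (y : D), R k ((Complex.I * (k : ℂ)) • (y : X) - A y
      - ∑ j, Complex.exp (-Complex.I * (k : ℂ) * (r j : ℂ)) • B (y : X)) = (y : X))
    (hsol : ∀ f : ℝ → X, PeriodicLp p f →
      ∃ x : ℝ → X, Function.Periodic x (2 * Real.pi) ∧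
        ContinuousOn x (Set.Icc 0 (2 * Real.pi)) ∧
        ∃ hxmem : ∀ t ∈ Set.Icc (0:ℝ) (2 * Real.pi), (∫ s in (0:ℝ)..t, x s) ∈ D,
          ∀ t : ℝ, ∀ ht : t ∈ Set.Icc (0:ℝ) (2 * Real.pi),
            x t = x 0 + A ⟨∫ s in (0:ℝ)..t, x s, hxmem t ht⟩
              + ∫ s in (0:ℝ)..t, ((∑ j, B (x (s - r j))) + f s)) :
    IsLpMultiplier p R := by
  rintro f ⟨hfper, hfLp⟩
  obtain ⟨x, hxper, hxcont, hxmem, hmild⟩ := hsol f ⟨hfper, hfLp⟩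
  have hx : IntervalIntegrable x volume 0 (2 * π) := hxcont.intervalIntegrable_of_Icc two_pi_pos.le
  have hf : IntervalIntegrable f volume 0 (2 * π) :=
    (intervalIntegrable_iff_integrableOn_Ioc_of_le two_pi_pos.le).2 (hfLp.integrable hp1)
  refine ⟨x, ⟨hxper, hxcont.memLp_restrict_Ioc p⟩, fun k => ?_⟩
  set T : X →L[ℂ] X := (I * k) • ContinuousLinearMap.id ℂ X - delayOp B r k
  have hL (y : D) : R k (T y - A y) = y := by
    convert hRleft k y using 2
    simp only [T, sub_apply, smul_apply, ContinuousLinearMap.id_apply, delayOp_apply]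
    abel
  rw [fourierCoef_eq_of_mild_solution hL hx ((intervalIntegrable_delaySum B r hxper hx).add hf)
      (by simpa using hxper 0) hxmem hmild, fourierCoef_delay_add B r hxper hx hf]
  congr 1
  simp only [T, sub_apply, smul_apply, ContinuousLinearMap.id_apply]
  abel

/-- If every `Δ_k = ikI - A - Σ_j e^{-ikr_j} B : D(A) → X` is bijective
with bounded inverse `R k`, and every `f ∈ L^p(𝕋; X)` admits a `2π`-periodic mild solution
(in the integrated sense), then `{Δ_k⁻¹}_{k∈ℤ}` is an `L^p`-multiplier. -/
theorem mild_solvability_implies_multiplier {X : Type*}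
    [NormedAddCommGroup X] [NormedSpace ℂ X] [CompleteSpace X]
    (p : ℝ≥0∞) (hp1 : 1 ≤ p) (hp2 : p < ⊤)
    (D : Submodule ℂ X) (A : D →ₗ[ℂ] X) (hA : IsClosedOp D A)
    (B : X →L[ℂ] X) (n : ℕ) (r : Fin n → ℝ)
    (R : ℤ → (X →L[ℂ] X))
    (hRmem : ∀ (k : ℤ) (z : X), R k z ∈ D)
    (hRright : ∀ (k : ℤ) (z : X), (Complex.I * (k : ℂ)) • R k z - A ⟨R k z, hRmem k z⟩
      - ∑ j, Complex.exp (-Complex.I * (k : ℂ) * (r j : ℂ)) • B (R k z) = z)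
    (hRleft : ∀ (k : ℤ) (y : D), R k ((Complex.I * (k : ℂ)) • (y : X) - A y
      - ∑ j, Complex.exp (-Complex.I * (k : ℂ) * (r j : ℂ)) • B (y : X)) = (y : X))
    (hsol : ∀ f : ℝ → X, PeriodicLp p f →
      ∃ x : ℝ → X, Function.Periodic x (2 * Real.pi) ∧
        ContinuousOn x (Set.Icc 0 (2 * Real.pi)) ∧
        ∃ hxmem : ∀ t ∈ Set.Icc (0:ℝ) (2 * Real.pi), (∫ s in (0:ℝ)..t, x s) ∈ D,
          ∀ t : ℝ, ∀ ht : t ∈ Set.Icc (0:ℝ) (2 * Real.pi),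
            x t = x 0 + A ⟨∫ s in (0:ℝ)..t, x s, hxmem t ht⟩
              + ∫ s in (0:ℝ)..t, ((∑ j, B (x (s - r j))) + f s)) :
    IsLpMultiplier p R :=
  mild_solvability_implies_multiplier_general p hp1 D A B n r R hRleft hsol
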